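/- Let U ⊆ ℝ³ be open, let f, g, h : U → ℝ be continuously differentiable with f nonvanishing on U, and let I : U → ℝ be twice continuously differentiable with f·∂I/∂x + g·∂I/∂y + h·∂I/∂z = 0 on U and ∂I/∂z nonvanishing on U. Define the S-function S := (∂I/∂y)/(∂I/∂z). Then on U: f·∂S/∂x + g·∂S/∂y + h·∂S/∂z = S²·(f·∂g/∂z − g·∂f/∂z)/f + S·(g·∂f/∂y + f·∂h/∂z − f·∂g/∂y − h·∂f/∂z)/f − (f·∂h/∂y − h·∂f/∂y)/f. -/

import Mathlib

/-!
Let `D = f ∂ₓ + g ∂ᵧ + h ∂_z` be the Darboux operator of the vector field `V = (f, g, h)`.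
Differentiating `D[I] = 0` in a direction `w` and using the symmetry of the Hessian of `I` gives
`D[∂_w I] = -dI(∂_w V)`. By the quotient rule `D[S] = (D[I_y] I_z - I_y D[I_z]) / I_z²`, and
eliminating `I_x = -(g I_y + h I_z) / f` leaves a quadratic polynomial in `S = I_y / I_z`.
-/

open Topology

/-- Partial derivative in the `x` direction of a function on `ℝ³`. -/
noncomputable def pdX (F : ℝ × ℝ × ℝ → ℝ) (p : ℝ × ℝ × ℝ) : ℝ :=
  fderiv ℝ F p (1, 0, 0)

/-- Partial derivative in the `y` direction. -/
noncomputable def pdY (F : ℝ × ℝ × ℝ → ℝ) (p : ℝ × ℝ × ℝ) : ℝ :=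
  fderiv ℝ F p (0, 1, 0)

/-- Partial derivative in the `z` direction. -/
noncomputable def pdZ (F : ℝ × ℝ × ℝ → ℝ) (p : ℝ × ℝ × ℝ) : ℝ :=
  fderiv ℝ F p (0, 0, 1)

/-- The S-function associated with a first integral `I`: `S = (∂I/∂y)/(∂I/∂z)`. -/
noncomputable def Sfun (I : ℝ × ℝ × ℝ → ℝ) (p : ℝ × ℝ × ℝ) : ℝ :=
  pdY I p / pdZ I p

section

variable {𝕜 E : Type*} [NontriviallyNormedField 𝕜] [NormedAddCommGroup E] [NormedSpace 𝕜 E]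

theorem fderiv_fun_div_apply {a b : E → 𝕜} {p : E} (ha : DifferentiableAt 𝕜 a p)
    (hb : DifferentiableAt 𝕜 b p) (hbp : b p ≠ 0) (v : E) :
    fderiv 𝕜 (fun q => a q / b q) p v =
      (fderiv 𝕜 a p v * b p - a p * fderiv 𝕜 b p v) / b p ^ 2 := by
  have hdiv := ha.hasFDerivAt.fun_mul ((hasDerivAt_inv hbp).comp_hasFDerivAt p hb.hasFDerivAt)
  simp only [Function.comp_def, ← div_eq_mul_inv] at hdiv
  rw [hdiv.fderiv]
  simp only [add_apply, smul_apply, smul_eq_mul, neg_mul, mul_neg]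
  field_simp
  ring

end

section

variable {𝕜 E F : Type*} [RCLike 𝕜] [NormedAddCommGroup E] [NormedSpace 𝕜 E]
  [NormedAddCommGroup F] [NormedSpace 𝕜 F] {I : E → F} {V : E → E} {p : E}

theorem fderiv_fderiv_apply_vectorField_of_eventuallyEq_zero (hI : ContDiffAt 𝕜 2 I p)
    (hV : DifferentiableAt 𝕜 V p) (hinv : (fun q => fderiv 𝕜 I q (V q)) =ᶠ[𝓝 p] 0) (w : E) :
    fderiv 𝕜 (fun q => fderiv 𝕜 I q w) p (V p) = -fderiv 𝕜 I p (fderiv 𝕜 V p w) := by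
  have hI' : DifferentiableAt 𝕜 (fderiv 𝕜 I) p :=
    (hI.fderiv_right le_rfl).differentiableAt one_ne_zero
  have hsymm : fderiv 𝕜 (fderiv 𝕜 I) p (V p) w = fderiv 𝕜 (fderiv 𝕜 I) p w (V p) :=
    hI.isSymmSndFDerivAt (by simp) _ _
  have hzero : fderiv 𝕜 (fun q => fderiv 𝕜 I q (V q)) p w = 0 := by
    simp [hinv.fderiv_eq]
  rw [fderiv_clm_apply hI' hV] at hzero
  rw [fderiv_clm_apply hI' (differentiableAt_const w)]
  simp only [add_apply, ContinuousLinearMap.comp_apply, ContinuousLinearMap.flip_apply,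
    fderiv_const_apply, zero_apply, map_zero, zero_add] at hzero ⊢
  rw [hsymm]
  exact eq_neg_of_add_eq_zero_right hzero

end

noncomputable def darboux (f g h F : ℝ × ℝ × ℝ → ℝ) (p : ℝ × ℝ × ℝ) : ℝ :=
  f p * pdX F p + g p * pdY F p + h p * pdZ F p

section

variable {f g h F : ℝ × ℝ × ℝ → ℝ} {p : ℝ × ℝ × ℝ}

theorem fderiv_apply_eq_partials (a b c : ℝ) :
    fderiv ℝ F p (a, b, c) = a * pdX F p + b * pdY F p + c * pdZ F p := by
  have hdecomp : ((a, b, c) : ℝ × ℝ × ℝ) = a • (1, 0, 0) + b • (0, 1, 0) + c • (0, 0, 1) := by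
    simp
  rw [hdecomp, map_add, map_add, map_smul, map_smul, map_smul]
  rfl

theorem darboux_eq_fderiv : darboux f g h F p = fderiv ℝ F p (f p, g p, h p) :=
  (fderiv_apply_eq_partials _ _ _).symm

theorem darboux_fun_div {a b : ℝ × ℝ × ℝ → ℝ} (ha : DifferentiableAt ℝ a p)
    (hb : DifferentiableAt ℝ b p) (hbp : b p ≠ 0) :
    darboux f g h (fun q => a q / b q) p =
      (darboux f g h a p * b p - a p * darboux f g h b p) / b p ^ 2 := by
  simp only [darboux_eq_fderiv, fderiv_fun_div_apply ha hb hbp]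

theorem darboux_fderiv_apply_of_eventually_darboux_eq_zero {I : ℝ × ℝ × ℝ → ℝ}
    (hf : DifferentiableAt ℝ f p) (hg : DifferentiableAt ℝ g p) (hh : DifferentiableAt ℝ h p)
    (hI : ContDiffAt ℝ 2 I p) (hinv : ∀ᶠ q in 𝓝 p, darboux f g h I q = 0) (w : ℝ × ℝ × ℝ) :
    darboux f g h (fun q => fderiv ℝ I q w) p =
      -(fderiv ℝ f p w * pdX I p + fderiv ℝ g p w * pdY I p + fderiv ℝ h p w * pdZ I p) := by
  have hV : DifferentiableAt ℝ (fun q => (f q, g q, h q)) p := hf.prodMk (hg.prodMk hh)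
  have hinv' : (fun q => fderiv ℝ I q (f q, g q, h q)) =ᶠ[𝓝 p] 0 := by
    filter_upwards [hinv] with q hq
    rwa [← darboux_eq_fderiv]
  rw [darboux_eq_fderiv, fderiv_fderiv_apply_vectorField_of_eventuallyEq_zero hI hV hinv',
    hf.fderiv_prodMk (hg.prodMk hh), ContinuousLinearMap.prod_apply, hg.fderiv_prodMk hh,
    ContinuousLinearMap.prod_apply, fderiv_apply_eq_partials]

end

theorem S_function_riccati_equation
    (U : Set (ℝ × ℝ × ℝ)) (hU : IsOpen U)
    (f g h I : ℝ × ℝ × ℝ → ℝ)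
    (hf : ContDiffOn ℝ 1 f U) (hg : ContDiffOn ℝ 1 g U) (hh : ContDiffOn ℝ 1 h U)
    (hfne : ∀ p ∈ U, f p ≠ 0)
    (hI : ContDiffOn ℝ 2 I U)
    (hinv : ∀ p ∈ U, f p * pdX I p + g p * pdY I p + h p * pdZ I p = 0)
    (hIz : ∀ p ∈ U, pdZ I p ≠ 0) :
    ∀ p ∈ U,
      f p * pdX (Sfun I) p + g p * pdY (Sfun I) p + h p * pdZ (Sfun I) p =
        (Sfun I p) ^ 2 * (f p * pdZ g p - g p * pdZ f p) / f p
          + Sfun I p *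
            (g p * pdY f p + f p * pdZ h p - f p * pdY g p - h p * pdZ f p) / f p
          - (f p * pdY h p - h p * pdY f p) / f p := by
  intro p hp
  have hmem : U ∈ 𝓝 p := hU.mem_nhds hp
  have hIp : ContDiffAt ℝ 2 I p := hI.contDiffAt hmem
  have hdiff : ∀ F : ℝ × ℝ × ℝ → ℝ, ContDiffOn ℝ 1 F U → DifferentiableAt ℝ F p :=
    fun F hF => (hF.contDiffAt hmem).differentiableAt one_ne_zero
  have hpdI : ∀ w, DifferentiableAt ℝ (fun q => fderiv ℝ I q w) p := fun w =>
    ((hIp.fderiv_right le_rfl).differentiableAt one_ne_zero).clm_apply (differentiableAt_const w)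
  have hfp := hfne p hp
  have hIzp := hIz p hp
  have hDI := darboux_fderiv_apply_of_eventually_darboux_eq_zero (hdiff f hf) (hdiff g hg)
    (hdiff h hh) hIp (Filter.eventually_of_mem hmem hinv)
  have hDy : darboux f g h (pdY I) p =
      -(pdY f p * pdX I p + pdY g p * pdY I p + pdY h p * pdZ I p) := hDI (0, 1, 0)
  have hDz : darboux f g h (pdZ I) p =
      -(pdZ f p * pdX I p + pdZ g p * pdY I p + pdZ h p * pdZ I p) := hDI (0, 0, 1)
  have hDS : darboux f g h (Sfun I) p =
      (darboux f g h (pdY I) p * pdZ I p - pdY I p * darboux f g h (pdZ I) p) / pdZ I p ^ 2 :=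
    darboux_fun_div (hpdI _) (hpdI _) hIzp
  change darboux f g h (Sfun I) p = _
  rw [hDS, hDy, hDz, Sfun]
  field_simp
  -- after clearing denominators the two sides differ by `(I_y f_z - I_z f_y) · D[I]`
  linear_combination (pdZ f p * pdY I p - pdY f p * pdZ I p) * hinv p hp
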